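/- arXiv:1903.02714 — 2 statements merged into one kernel-verified Lean document; each statement's English description precedes it below -/
import Mathlib

section
/- Let u_{a,α}(λ,·) denote, for each λ ∈ ℝ, the solution of -u'' + Vu = λu on [a,b] with a δ-interaction of strength α at p, satisfying u(a) = sin θ, u'(a) = -cos θ. Then for any x ∈ [a,b] \ {p} with u_{a,α}'(λ,x) ≠ 0, ∂/∂λ [ u_{a,α}(λ,x) / u_{a,α}'(λ,x) ] = (1 / u_{a,α}'(λ,x)²) ∫_a^x u_{a,α}(λ,t)² dt. -/
/-!
Perturbing `λ` to `m`, the Lagrange identity gives `(m - λ) ∫_a^x u_m u_λ = W(u_m, u_λ)(x)`: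
the Wronskian vanishes at `a` because the initial data do not depend on `λ`, and it is
continuous across the δ-interaction. Dividing by `m - λ` and letting `m → λ` gives
`∂_λ W(x) = ∫_a^x u_λ²`, that is `u' ∂_λ u - u ∂_λ u' = ∫_a^x u²`, the numerator of the quotient
rule. The limit is taken by dominated convergence; the uniform bound on `u_m` comes from a
Gronwall estimate for the energy `1 + u² + u'²`, whose logarithmic derivative is at most
`|1 + V - m|`.
-/

open Filter Topology Set MeasureTheory Function

theorem hasDerivAt_of_sub_eq_smul {𝕜 E : Type*} [NontriviallyNormedField 𝕜]
    [NormedAddCommGroup E] [NormedSpace 𝕜 E] {f g : 𝕜 → E} {x : 𝕜} (hg : ContinuousAt g x)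
    (h : ∀ y, f y - f x = (y - x) • g y) : HasDerivAt f (g x) x := by
  rw [hasDerivAt_iff_tendsto_slope]
  refine (hg.tendsto.mono_left nhdsWithin_le_nhds).congr' ?_
  filter_upwards [self_mem_nhdsWithin] with y hy
  rw [slope_def_module, h, smul_smul, inv_mul_cancel₀ (sub_ne_zero.2 hy), one_smul]

theorem le_mul_exp_integral_of_hasDerivAt {E E' φ : ℝ → ℝ} {c d : ℝ} (hcd : c ≤ d)
    (hE : ContinuousOn E (Icc c d)) (hpos : ∀ t ∈ Icc c d, 0 < E t)
    (hder : ∀ t ∈ Ioo c d, HasDerivAt E (E' t) t) (hφ : IntegrableOn φ (Icc c d))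
    (hle : ∀ t ∈ Ioo c d, E' t ≤ φ t * E t) :
    E d ≤ E c * Real.exp (∫ t in c..d, φ t) := by
  have hlog : Real.log (E d) - Real.log (E c) ≤ ∫ t in c..d, φ t := by
    refine intervalIntegral.sub_le_integral_of_hasDeriv_right_of_le hcd
      (hE.log fun t ht => (hpos t ht).ne')
      (fun t ht => ((hder t ht).log (hpos t (Ioo_subset_Icc_self ht)).ne').hasDerivWithinAt)
      hφ fun t ht => ?_
    rw [div_le_iff₀ (hpos t (Ioo_subset_Icc_self ht))]
    exact hle t ht
  calc E d = Real.exp (Real.log (E d)) := (Real.exp_log (hpos d (right_mem_Icc.2 hcd))).symm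
    _ ≤ Real.exp (Real.log (E c) + ∫ t in c..d, φ t) := Real.exp_le_exp.2 (by linarith)
    _ = E c * Real.exp (∫ t in c..d, φ t) := by
      rw [Real.exp_add, Real.exp_log (hpos c (left_mem_Icc.2 hcd))]

structure IsSolutionOn (V : ℝ → ℝ) (lam : ℝ) (y y' : ℝ → ℝ) (c d : ℝ) : Prop where
  continuousOn : ContinuousOn y (Icc c d)
  continuousOn_deriv : ContinuousOn y' (Icc c d)
  hasDerivAt : ∀ t ∈ Ioo c d, HasDerivAt y (y' t) t
  hasDerivAt_deriv : ∀ t ∈ Ioo c d, HasDerivAt y' ((V t - lam) * y t) t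

def wronskian (y y' z z' : ℝ → ℝ) (t : ℝ) : ℝ := y t * z' t - y' t * z t

def energy (y y' : ℝ → ℝ) (t : ℝ) : ℝ := 1 + y t ^ 2 + y' t ^ 2

theorem energy_pos (y y' : ℝ → ℝ) (t : ℝ) : 0 < energy y y' t := by
  unfold energy; positivity

theorem sq_le_energy (y y' : ℝ → ℝ) (t : ℝ) : y t ^ 2 ≤ energy y y' t := by
  unfold energy; nlinarith [sq_nonneg (y' t)]

namespace IsSolutionOn

variable {V : ℝ → ℝ} {l m : ℝ} {y y' z z' : ℝ → ℝ} {c d : ℝ}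

theorem mono (h : IsSolutionOn V l y y' c d) {c' d' : ℝ} (hc : c ≤ c') (hd : d' ≤ d) :
    IsSolutionOn V l y y' c' d' where
  continuousOn := h.continuousOn.mono (Icc_subset_Icc hc hd)
  continuousOn_deriv := h.continuousOn_deriv.mono (Icc_subset_Icc hc hd)
  hasDerivAt t ht := h.hasDerivAt t (Ioo_subset_Ioo hc hd ht)
  hasDerivAt_deriv t ht := h.hasDerivAt_deriv t (Ioo_subset_Ioo hc hd ht)

theorem mul_integral_eq_wronskian_sub (hy : IsSolutionOn V l y y' c d)
    (hz : IsSolutionOn V m z z' c d) (hcd : c ≤ d) :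
    (l - m) * ∫ t in c..d, y t * z t = wronskian y y' z z' d - wronskian y y' z z' c := by
  rw [← intervalIntegral.integral_const_mul]
  refine intervalIntegral.integral_eq_sub_of_hasDerivAt_of_le hcd
    ((hy.continuousOn.mul hz.continuousOn_deriv).sub (hy.continuousOn_deriv.mul hz.continuousOn))
    (fun t ht => ?_)
    (((hy.continuousOn.mul hz.continuousOn).const_mul _).intervalIntegrable_of_Icc hcd)
  exact (((hy.hasDerivAt t ht).mul (hz.hasDerivAt_deriv t ht)).sub
    ((hy.hasDerivAt_deriv t ht).mul (hz.hasDerivAt t ht))).congr_deriv (by ring)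

theorem energy_le (h : IsSolutionOn V l y y' c d) (hcd : c ≤ d) {φ : ℝ → ℝ}
    (hφ : IntegrableOn φ (Icc c d)) (hVφ : ∀ t ∈ Ioo c d, |1 + V t - l| ≤ φ t) :
    energy y y' d ≤ energy y y' c * Real.exp (∫ t in c..d, φ t) := by
  refine le_mul_exp_integral_of_hasDerivAt (E' := fun t => 2 * y t * y' t * (1 + V t - l)) hcd
    ((continuousOn_const.add (h.continuousOn.pow 2)).add (h.continuousOn_deriv.pow 2))
    (fun t _ => energy_pos y y' t) (fun t ht => ?_) hφ (fun t ht => ?_)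
  · exact (((hasDerivAt_const t (1 : ℝ)).add ((h.hasDerivAt t ht).pow 2)).add
      ((h.hasDerivAt_deriv t ht).pow 2)).congr_deriv (by ring)
  · have hw := hVφ t ht
    have hyy : 2 * |y t| * |y' t| ≤ y t ^ 2 + y' t ^ 2 := by
      nlinarith [sq_nonneg (|y t| - |y' t|), sq_abs (y t), sq_abs (y' t)]
    calc 2 * y t * y' t * (1 + V t - l) ≤ |2 * y t * y' t * (1 + V t - l)| := le_abs_self _
      _ = 2 * |y t| * |y' t| * |1 + V t - l| := by simp only [abs_mul, abs_two]
      _ ≤ (y t ^ 2 + y' t ^ 2) * φ t := mul_le_mul hyy hw (abs_nonneg _) (by positivity)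
      _ ≤ φ t * energy y y' t := by
        unfold energy; nlinarith [(abs_nonneg _).trans hw]

end IsSolutionOn

/-- `y' p` is the right derivative at `p`, and `jump` is the δ-interaction condition
`y'(p+) - y'(p-) = α y(p)`. -/
structure IsDeltaSolution (V : ℝ → ℝ) (a b p α lam : ℝ) (y y' : ℝ → ℝ) : Prop where
  hasDerivAt : ∀ t ∈ Icc a b, t ≠ p → HasDerivAt y (y' t) t
  hasDerivAt_deriv : ∀ t ∈ Icc a b, t ≠ p → HasDerivAt y' ((V t - lam) * y t) t
  tendsto_nhdsLT : Tendsto y (𝓝[<] p) (𝓝 (y p))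
  tendsto_nhdsGT : Tendsto y (𝓝[>] p) (𝓝 (y p))
  tendsto_deriv_nhdsGT : Tendsto y' (𝓝[>] p) (𝓝 (y' p))
  jump : ∃ d, Tendsto y' (𝓝[<] p) (𝓝 d) ∧ y' p - d = α * y p

namespace IsDeltaSolution

variable {V : ℝ → ℝ} {a b p α l m : ℝ} {y y' z z' : ℝ → ℝ}

theorem continuousOn (h : IsDeltaSolution V a b p α l y y') : ContinuousOn y (Icc a b) := by
  intro t ht
  refine ContinuousAt.continuousWithinAt ?_
  rcases eq_or_ne t p with rfl | htp
  · exact continuousAt_iff_continuous_left'_right'.2 ⟨h.tendsto_nhdsLT, h.tendsto_nhdsGT⟩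
  · exact (h.hasDerivAt t ht htp).continuousAt

theorem isSolutionOn_right (h : IsDeltaSolution V a b p α l y y') (hap : a ≤ p) :
    IsSolutionOn V l y y' p b where
  continuousOn := h.continuousOn.mono (Icc_subset_Icc_left hap)
  continuousOn_deriv t ht := by
    rcases eq_or_ne t p with rfl | htp
    · exact (continuousWithinAt_Ioi_iff_Ici.1 h.tendsto_deriv_nhdsGT).mono Icc_subset_Ici_self
    · exact (h.hasDerivAt_deriv t ⟨hap.trans ht.1, ht.2⟩ htp).continuousAt.continuousWithinAt
  hasDerivAt t ht := h.hasDerivAt t ⟨hap.trans ht.1.le, ht.2.le⟩ ht.1.ne'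
  hasDerivAt_deriv t ht := h.hasDerivAt_deriv t ⟨hap.trans ht.1.le, ht.2.le⟩ ht.1.ne'

theorem exists_isSolutionOn_left (h : IsDeltaSolution V a b p α l y y') (hpb : p ≤ b) :
    ∃ d, y' p = d + α * y p ∧ IsSolutionOn V l y (update y' p d) a p := by
  obtain ⟨d, hd, hjump⟩ := h.jump
  have hmem {t : ℝ} (ht : t ∈ Ioo a p) : t ∈ Icc a b := ⟨ht.1.le, ht.2.le.trans hpb⟩
  have hupdate {t : ℝ} (ht : t ∈ Ioo a p) : update y' p d =ᶠ[𝓝 t] y' :=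
    eventually_ne_nhds ht.2.ne |>.mono fun s hs => update_of_ne hs _ _
  refine ⟨d, by linarith, ?_, ?_, fun t ht => ?_, fun t ht => ?_⟩
  · exact h.continuousOn.mono (Icc_subset_Icc_right hpb)
  · intro t ht
    rcases eq_or_ne t p with rfl | htp
    · exact continuousWithinAt_update_same.2 (hd.mono_left (nhdsWithin_mono _ fun s hs =>
        lt_of_le_of_ne hs.1.2 hs.2))
    · rw [continuousWithinAt_update_of_ne htp]
      exact (h.hasDerivAt_deriv t ⟨ht.1, ht.2.trans hpb⟩ htp).continuousAt.continuousWithinAt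
  · rw [update_of_ne ht.2.ne]
    exact h.hasDerivAt t (hmem ht) ht.2.ne
  · exact (h.hasDerivAt_deriv t (hmem ht) ht.2.ne).congr_of_eventuallyEq (hupdate ht)

theorem mul_integral_eq_wronskian_sub (hy : IsDeltaSolution V a b p α l y y')
    (hz : IsDeltaSolution V a b p α m z z') (hp : p ∈ Icc a b) {x : ℝ} (hx : x ∈ Icc a b) :
    (l - m) * ∫ t in a..x, y t * z t = wronskian y y' z z' x - wronskian y y' z z' a := by
  obtain ⟨dy, hdy, hyL⟩ := hy.exists_isSolutionOn_left hp.2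
  obtain ⟨dz, hdz, hzL⟩ := hz.exists_isSolutionOn_left hp.2
  -- the δ-interaction does not change the Wronskian at `p`
  have hW : wronskian y (update y' p dy) z (update z' p dz) = wronskian y y' z z' := by
    funext t
    rcases eq_or_ne t p with rfl | htp
    · simp only [wronskian, update_self, hdy, hdz]; ring
    · simp only [wronskian, update_of_ne htp]
  rcases le_total x p with hxp | hpx
  · rw [← hW]
    exact (hyL.mono le_rfl hxp).mul_integral_eq_wronskian_sub (hzL.mono le_rfl hxp) hx.1
  · have hint {c d : ℝ} (hc : c ∈ Icc a b) (hd : d ∈ Icc a b) :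
        IntervalIntegrable (fun t => y t * z t) volume c d :=
      ((hy.continuousOn.mul hz.continuousOn).mono (uIcc_subset_Icc hc hd)).intervalIntegrable
    have ha : a ∈ Icc a b := ⟨le_rfl, hp.1.trans hp.2⟩
    rw [← intervalIntegral.integral_add_adjacent_intervals (hint ha hp) (hint hp hx), mul_add,
      hyL.mul_integral_eq_wronskian_sub hzL hp.1, hW,
      ((hy.isSolutionOn_right hp.1).mono le_rfl hx.2).mul_integral_eq_wronskian_sub
        ((hz.isSolutionOn_right hp.1).mono le_rfl hx.2) hpx]
    ring

theorem sq_le (h : IsDeltaSolution V a b p α l y y') (hp : p ∈ Ioo a b) {φ : ℝ → ℝ}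
    (hφ : IntegrableOn φ (Icc a b)) (hVφ : ∀ t ∈ Icc a b, |1 + V t - l| ≤ φ t)
    {t : ℝ} (ht : t ∈ Icc a b) :
    y t ^ 2 ≤ (2 + 2 * α ^ 2) * energy y y' a * Real.exp (∫ s in a..b, φ s) ^ 2 := by
  set B := ∫ s in a..b, φ s
  have hφ_nonneg : ∀ s ∈ Icc a b, 0 ≤ φ s := fun s hs => (abs_nonneg _).trans (hVφ s hs)
  have hexpB : 1 ≤ Real.exp B := Real.one_le_exp
    (intervalIntegral.integral_nonneg (hp.1.trans hp.2).le hφ_nonneg)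
  have henergy {y₁ y₁' : ℝ → ℝ} {c d : ℝ} (hsol : IsSolutionOn V l y₁ y₁' c d) (hac : a ≤ c)
      (hcd : c ≤ d) (hdb : d ≤ b) : energy y₁ y₁' d ≤ energy y₁ y₁' c * Real.exp B := by
    refine (hsol.energy_le hcd (hφ.mono_set (Icc_subset_Icc hac hdb))
      fun s hs => hVφ s ⟨hac.trans hs.1.le, hs.2.le.trans hdb⟩).trans ?_
    gcongr
    · exact (energy_pos _ _ _).le
    · exact intervalIntegral.integral_mono_interval hac hcd hdb
        ((ae_restrict_iff' measurableSet_Ioc).2 (ae_of_all _ fun s hs =>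
          hφ_nonneg s ⟨hs.1.le, hs.2⟩))
        ((intervalIntegrable_iff_integrableOn_Icc_of_le (hp.1.trans hp.2).le).2 hφ)
  obtain ⟨d, hd, hL⟩ := h.exists_isSolutionOn_left hp.2.le
  have hleft {s : ℝ} (hs : s ∈ Icc a p) :
      energy y (update y' p d) s ≤ energy y y' a * Real.exp B := by
    have hstart : energy y (update y' p d) a = energy y y' a := by
      simp only [energy, update_of_ne hp.1.ne]
    simpa only [hstart] using henergy (hL.mono le_rfl hs.2) le_rfl hs.1 (hs.2.trans hp.2.le)
  have hEa := (energy_pos y y' a).le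
  have hα : 1 ≤ 2 + 2 * α ^ 2 := by nlinarith [sq_nonneg α]
  rcases le_total t p with htp | hpt
  · calc y t ^ 2 ≤ energy y (update y' p d) t := sq_le_energy _ _ _
      _ ≤ energy y y' a * Real.exp B := hleft ⟨ht.1, htp⟩
      _ = 1 * energy y y' a * Real.exp B * 1 := by ring
      _ ≤ (2 + 2 * α ^ 2) * energy y y' a * Real.exp B * Real.exp B := by gcongr
      _ = _ := by ring
  · have hjump : energy y y' p ≤ (2 + 2 * α ^ 2) * energy y (update y' p d) p := by
      simp only [energy, update_self, hd]
      nlinarith [sq_nonneg (d - α * y p), sq_nonneg α, sq_nonneg (α * y p)]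
    calc y t ^ 2 ≤ energy y y' t := sq_le_energy _ _ _
      _ ≤ energy y y' p * Real.exp B :=
        henergy ((h.isSolutionOn_right hp.1.le).mono le_rfl ht.2) hp.1.le hpt ht.2
      _ ≤ (2 + 2 * α ^ 2) * (energy y y' a * Real.exp B) * Real.exp B := by
        gcongr
        exact hjump.trans (by gcongr; exact hleft ⟨hp.1.le, le_rfl⟩)
      _ = _ := by ring

end IsDeltaSolution

section Family

variable {V : ℝ → ℝ} {a b p α lam : ℝ} {u u' : ℝ → ℝ → ℝ}

theorem continuousAt_integral_mul
    (hsol : ∀ m, IsDeltaSolution V a b p α m (u m) (u' m)) (hp : p ∈ Ioo a b)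
    (hV : IntegrableOn V (Icc a b)) (hcont : ∀ t, Continuous fun m => u m t)
    (hinit : ∀ m, u m a = u lam a ∧ u' m a = u' lam a) {x : ℝ} (hx : x ∈ Icc a b) :
    ContinuousAt (fun m => ∫ t in a..x, u m t * u lam t) lam := by
  set φ : ℝ → ℝ := fun t => |V t| + (|lam| + 2)
  have hφ : IntegrableOn φ (Icc a b) := hV.abs.add (integrableOn_const measure_Icc_lt_top.ne)
  have hsub : uIoc a x ⊆ Icc a b := by
    rw [uIoc_of_le hx.1]; exact Ioc_subset_Icc_self.trans (Icc_subset_Icc_right hx.2)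
  set K := (2 + 2 * α ^ 2) * energy (u lam) (u' lam) a * Real.exp (∫ s in a..b, φ s) ^ 2
  have hbound : ∀ m ∈ Icc (lam - 1) (lam + 1), ∀ t ∈ Icc a b, u m t ^ 2 ≤ K := by
    intro m hm t ht
    have hVφ : ∀ s ∈ Icc a b, |1 + V s - m| ≤ φ s := fun s _ => by
      have : |m| ≤ |lam| + 1 := abs_le.2
        ⟨by linarith [hm.1, neg_abs_le lam], by linarith [hm.2, le_abs_self lam]⟩
      calc |1 + V s - m| ≤ |1 + V s| + |m| := abs_sub _ _
        _ ≤ 1 + |V s| + |m| := by gcongr; exact (abs_add_le _ _).trans (by simp)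
        _ ≤ φ s := by simp only [φ]; linarith
    have hEa : energy (u m) (u' m) a = energy (u lam) (u' lam) a := by
      simp only [energy, (hinit m).1, (hinit m).2]
    simpa only [hEa] using (hsol m).sq_le hp hφ hVφ ht
  refine intervalIntegral.continuousAt_of_dominated_interval (bound := fun _ => K) ?_ ?_
    intervalIntegrable_const (ae_of_all _ fun t _ => (hcont t).continuousAt.mul continuousAt_const)
  · exact Eventually.of_forall fun m =>
      (((hsol m).continuousOn.mul (hsol lam).continuousOn).mono hsub).aestronglyMeasurable
        measurableSet_uIoc
  · filter_upwards [Icc_mem_nhds (sub_one_lt lam) (lt_add_one lam)] with m hm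
    refine ae_of_all _ fun t ht => ?_
    have h1 := hbound m hm t (hsub ht)
    have h2 := hbound lam ⟨by linarith, by linarith⟩ t (hsub ht)
    rw [Real.norm_eq_abs, abs_mul]
    nlinarith [sq_nonneg (|u m t| - |u lam t|), sq_abs (u m t), sq_abs (u lam t)]

theorem hasDerivAt_wronskian
    (hsol : ∀ m, IsDeltaSolution V a b p α m (u m) (u' m)) (hp : p ∈ Ioo a b)
    (hV : IntegrableOn V (Icc a b)) (hcont : ∀ t, Continuous fun m => u m t)
    (hinit : ∀ m, u m a = u lam a ∧ u' m a = u' lam a) {x : ℝ} (hx : x ∈ Icc a b) :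
    HasDerivAt (fun m => wronskian (u m) (u' m) (u lam) (u' lam) x)
      (∫ t in a..x, u lam t * u lam t) lam := by
  refine hasDerivAt_of_sub_eq_smul (continuousAt_integral_mul hsol hp hV hcont hinit hx)
    fun m => ?_
  rw [smul_eq_mul, (hsol m).mul_integral_eq_wronskian_sub (hsol lam) (Ioo_subset_Icc_self hp) hx]
  simp only [wronskian, (hinit m).1, (hinit m).2]
  ring

end Family

theorem atkinson_lambda_derivative_quot_general
    (V : ℝ → ℝ) (a b p α θ : ℝ) (hp : p ∈ Ioo a b)
    (hV : IntegrableOn V (Icc a b))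
    (u u' : ℝ → ℝ → ℝ)  -- u lam t, u' lam t
    -- for each λ, a solution with δ-interaction of strength α at p
    (hderiv : ∀ lam : ℝ, ∀ t ∈ Icc a b, t ≠ p → HasDerivAt (u lam) (u' lam t) t)
    (hode : ∀ lam : ℝ, ∀ t ∈ Icc a b, t ≠ p →
      HasDerivAt (u' lam) (V t * u lam t - lam * u lam t) t)
    (hcontR : ∀ lam : ℝ, Tendsto (u lam) (𝓝[>] p) (𝓝 (u lam p)))
    (hcontL : ∀ lam : ℝ, Tendsto (u lam) (𝓝[<] p) (𝓝 (u lam p)))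
    (hderR : ∀ lam : ℝ, Tendsto (u' lam) (𝓝[>] p) (𝓝 (u' lam p)))
    (hjump : ∀ lam : ℝ, ∃ dm, Tendsto (u' lam) (𝓝[<] p) (𝓝 dm) ∧
      u' lam p - dm = α * u lam p)
    -- boundary normalization at a
    (hic : ∀ lam : ℝ, u lam a = Real.sin θ ∧ u' lam a = -Real.cos θ)
    -- entire dependence on λ for each fixed x
    (hentire : ∀ t : ℝ, Differentiable ℝ (fun l => u l t) ∧ Differentiable ℝ (fun l => u' l t))
    (lam x : ℝ) (hx : x ∈ Icc a b) (h0 : u' lam x ≠ 0) :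
    deriv (fun l => u l x / u' l x) lam
      = (1 / (u' lam x) ^ 2) * ∫ t in a..x, (u lam t) ^ 2 := by
  have hsol (m : ℝ) : IsDeltaSolution V a b p α m (u m) (u' m) :=
    ⟨hderiv m, fun t ht htp => (hode m t ht htp).congr_deriv (by ring), hcontL m, hcontR m,
      hderR m, hjump m⟩
  have hW := hasDerivAt_wronskian hsol hp hV (fun t => (hentire t).1.continuous)
    (fun m => ⟨(hic m).1.trans (hic lam).1.symm, (hic m).2.trans (hic lam).2.symm⟩) hx
  have hu := ((hentire x).1 lam).hasDerivAt
  have hu' := ((hentire x).2 lam).hasDerivAt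
  have hnumerator := hW.unique ((hu.mul_const (u' lam x)).sub (hu'.mul_const (u lam x)))
  have hquot : HasDerivAt (fun l => u l x / u' l x) _ lam := hu.div hu' h0
  rw [hquot.deriv, funext fun t => sq (u lam t), hnumerator]
  field_simp

/-- **Atkinson-type identity for the λ-derivative of `u/u'`.**
Let `u α λ x = u_{a,α}(λ,x)` be the solution of `-u'' + V u = λ u` on `[a,b]` with a
δ-interaction of strength `α` at `p`, normalized by `u(λ,a) = sin θ`, `u'(λ,a) = -cos θ`,
depending differentiably (entirely) on `λ`.  Then for `x ∈ [a,b] \ {p}` with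
`u'(λ,x) ≠ 0`,
`∂/∂λ [u(λ,x)/u'(λ,x)] = (1/u'(λ,x)²) ∫_a^x u(λ,t)² dt`. -/
theorem atkinson_lambda_derivative_quot
    (V : ℝ → ℝ) (a b p α θ : ℝ) (hab : a < b) (hp : p ∈ Ioo a b)
    (hθ : θ ∈ Ico 0 Real.pi) (hV : IntegrableOn V (Icc a b))
    (u u' : ℝ → ℝ → ℝ)  -- u lam t, u' lam t
    -- for each λ, a solution with δ-interaction of strength α at p
    (hderiv : ∀ lam : ℝ, ∀ t ∈ Icc a b, t ≠ p → HasDerivAt (u lam) (u' lam t) t)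
    (hode : ∀ lam : ℝ, ∀ t ∈ Icc a b, t ≠ p →
      HasDerivAt (u' lam) (V t * u lam t - lam * u lam t) t)
    (hcontR : ∀ lam : ℝ, Tendsto (u lam) (𝓝[>] p) (𝓝 (u lam p)))
    (hcontL : ∀ lam : ℝ, Tendsto (u lam) (𝓝[<] p) (𝓝 (u lam p)))
    (hderR : ∀ lam : ℝ, Tendsto (u' lam) (𝓝[>] p) (𝓝 (u' lam p)))
    (hjump : ∀ lam : ℝ, ∃ dm, Tendsto (u' lam) (𝓝[<] p) (𝓝 dm) ∧
      u' lam p - dm = α * u lam p)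
    -- boundary normalization at a
    (hic : ∀ lam : ℝ, u lam a = Real.sin θ ∧ u' lam a = -Real.cos θ)
    -- entire dependence on λ for each fixed x
    (hentire : ∀ t : ℝ, Differentiable ℝ (fun l => u l t) ∧ Differentiable ℝ (fun l => u' l t))
    (lam x : ℝ) (hx : x ∈ Icc a b) (hxp : x ≠ p) (h0 : u' lam x ≠ 0) :
    deriv (fun l => u l x / u' l x) lam
      = (1 / (u' lam x) ^ 2) * ∫ t in a..x, (u lam t) ^ 2 :=
  atkinson_lambda_derivative_quot_general V a b p α θ hp hV u u' hderiv hode hcontR hcontL hderR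
    hjump hic hentire lam x hx h0
end

section
/- Let u_{a,α}, u_{b,α} be solutions of the δ-interaction equation satisfying fixed boundary conditions at a and b respectively, and define G_α(z;p,p) = u_{a,α}(z,p) u_{b,α}(z,p) / W_p(u_{a,α}(z), u_{b,α}(z)). Then for every α ∈ ℝ, G_α(z;p,p) = G_0(z;p,p) / (1 - α G_0(z;p,p)), where G_0 corresponds to the problem without point interaction. -/
/-!
At `p` the interacting solutions have the same Cauchy data as the free ones, except that the
δ-condition shifts the right derivative: `u_{a,α}'(p) = u_{a,0}'(p) + α u_{a,0}(p)`. Hence the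
Wronskian drops by `α u_{a,0}(p) u_{b,0}(p)`, and `G_α = G₀ / (1 - α G₀)` is algebra.
-/

open Filter Topology Set

/-- `G(z;p,p)` in terms of the Cauchy data `(u_a(p), u_a'(p))`, `(u_b(p), u_b'(p))`. -/
def greenDiag {K : Type*} [Field K] (u u' v v' : K) : K :=
  u * v / (u * v' - u' * v)

theorem greenDiag_add_jump {K : Type*} [Field K] (α u u' v v' : K)
    (hW : u * v' - u' * v ≠ 0) :
    greenDiag u (u' + α * u) v v'
      = greenDiag u u' v v' / (1 - α * greenDiag u u' v v') := by
  have hden : 1 - α * greenDiag u u' v v'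
      = (u * v' - u' * v - α * (u * v)) / (u * v' - u' * v) := by
    rw [sub_div, div_self hW, greenDiag, ← mul_div_assoc]
  rw [hden, greenDiag, greenDiag, div_div_div_cancel_right₀ hW]
  ring_nf

theorem eq_of_tendsto_nhdsLT_of_eqOn_Iio {α β : Type*} [TopologicalSpace α] [Preorder α]
    [TopologicalSpace β] [T2Space β] {f g : α → β} {p : α} [(𝓝[<] p).NeBot] {l : β}
    (hf : Tendsto f (𝓝[<] p) (𝓝 l)) (hg : ContinuousAt g p) (hfg : EqOn f g (Iio p)) :
    l = g p :=
  tendsto_nhds_unique hf <| hg.continuousWithinAt.tendsto.congr' <|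
    eventually_nhdsWithin_of_forall fun _ ht => (hfg ht).symm

theorem green_function_one_delta_interaction_general
    (V : ℝ → ℝ) (a b p : ℝ) (α : ℝ) (z : ℂ)
    (hp : p ∈ Ioo a b)
    (ua₀ ua₀' uaα uaα' ub₀ ub₀' ubα ubα' : ℝ → ℂ)
    -- free solutions (no interaction): classical solutions on all of [a,b]
    (h0a : ∀ t ∈ Icc a b, HasDerivAt ua₀ (ua₀' t) t ∧
      HasDerivAt ua₀' ((V t : ℂ) * ua₀ t - z * ua₀ t) t)
    -- continuity and δ-jump conditions at p (values at p are right limits)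
    (hjumpa : ∃ dm, Tendsto uaα' (𝓝[<] p) (𝓝 dm) ∧ uaα' p - dm = (α : ℂ) * uaα p)
    -- agreement: u_{a,α} = u_{a,0} on x ≤ p and u_{b,α} = u_{b,0} on x ≥ p
    (heqa : ∀ t ≤ p, uaα t = ua₀ t) (heqa' : ∀ t < p, uaα' t = ua₀' t)
    (heqb : ∀ t, p ≤ t → ubα t = ub₀ t ∧ ubα' t = ub₀' t)
    -- the free Wronskian does not vanish (z is not an eigenvalue of H₀)
    (hW₀ : ua₀ p * ub₀' p - ua₀' p * ub₀ p ≠ 0) :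
    uaα p * ubα p / (uaα p * ubα' p - uaα' p * ubα p)
      = (ua₀ p * ub₀ p / (ua₀ p * ub₀' p - ua₀' p * ub₀ p))
        / (1 - (α : ℂ) * (ua₀ p * ub₀ p / (ua₀ p * ub₀' p - ua₀' p * ub₀ p))) := by
  obtain ⟨dm, hdm, hjump⟩ := hjumpa
  have hdm_eq : dm = ua₀' p :=
    eq_of_tendsto_nhdsLT_of_eqOn_Iio hdm (h0a p (Ioo_subset_Icc_self hp)).2.continuousAt
      fun t ht => heqa' t ht
  have hua : uaα p = ua₀ p := heqa p le_rfl
  have hua' : uaα' p = ua₀' p + α * ua₀ p := by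
    rw [← hdm_eq, ← hua, ← hjump, add_sub_cancel]
  obtain ⟨hub, hub'⟩ := heqb p le_rfl
  rw [hua, hua', hub, hub']
  exact greenDiag_add_jump _ _ _ _ _ hW₀

/-- **The diagonal Green function with one δ-interaction.**
Let `u_{a,α}, u_{b,α}` solve `-u'' + V u = z u` with a δ-interaction of strength `α`
at `p`, satisfying fixed boundary conditions at `a` resp. `b`, and let
`u_{a,0}, u_{b,0}` solve the same problem without interaction, agreeing with the
interacting solutions on `x ≤ p` resp. `x ≥ p`.  With
`G_α(z;p,p) = u_{a,α}(p) u_{b,α}(p) / W_p(u_{a,α},u_{b,α})`,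
one has `G_α(z;p,p) = G₀(z;p,p) / (1 - α G₀(z;p,p))`.
(Values at `p` of derivatives are right limits; `W₀(p) ≠ 0` so that `G₀` is defined.) -/
theorem green_function_one_delta_interaction
    (V : ℝ → ℝ) (a b p : ℝ) (α : ℝ) (z : ℂ) (θ γ : ℝ)
    (hab : a < b) (hp : p ∈ Ioo a b) (hV : MeasureTheory.IntegrableOn V (Icc a b))
    (ua₀ ua₀' uaα uaα' ub₀ ub₀' ubα ubα' : ℝ → ℂ)
    -- free solutions (no interaction): classical solutions on all of [a,b]
    (h0a : ∀ t ∈ Icc a b, HasDerivAt ua₀ (ua₀' t) t ∧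
      HasDerivAt ua₀' ((V t : ℂ) * ua₀ t - z * ua₀ t) t)
    (h0b : ∀ t ∈ Icc a b, HasDerivAt ub₀ (ub₀' t) t ∧
      HasDerivAt ub₀' ((V t : ℂ) * ub₀ t - z * ub₀ t) t)
    -- interacting solutions: classical away from p
    (hαa : ∀ t ∈ Icc a b, t ≠ p → HasDerivAt uaα (uaα' t) t ∧
      HasDerivAt uaα' ((V t : ℂ) * uaα t - z * uaα t) t)
    (hαb : ∀ t ∈ Icc a b, t ≠ p → HasDerivAt ubα (ubα' t) t ∧
      HasDerivAt ubα' ((V t : ℂ) * ubα t - z * ubα t) t)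
    -- continuity and δ-jump conditions at p (values at p are right limits)
    (hconta : Tendsto uaα (𝓝[<] p) (𝓝 (uaα p)))
    (hcontb : Tendsto ubα (𝓝[<] p) (𝓝 (ubα p)))
    (hjumpa : ∃ dm, Tendsto uaα' (𝓝[<] p) (𝓝 dm) ∧ uaα' p - dm = (α : ℂ) * uaα p)
    (hjumpb : ∃ dm, Tendsto ubα' (𝓝[<] p) (𝓝 dm) ∧ ubα' p - dm = (α : ℂ) * ubα p)
    -- boundary conditions at a and at b
    (hbca0 : ua₀ a * (Real.cos θ : ℂ) + ua₀' a * (Real.sin θ : ℂ) = 0)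
    (hbcaα : uaα a * (Real.cos θ : ℂ) + uaα' a * (Real.sin θ : ℂ) = 0)
    (hbcb0 : ub₀ b * (Real.cos γ : ℂ) + ub₀' b * (Real.sin γ : ℂ) = 0)
    (hbcbα : ubα b * (Real.cos γ : ℂ) + ubα' b * (Real.sin γ : ℂ) = 0)
    -- agreement: u_{a,α} = u_{a,0} on x ≤ p and u_{b,α} = u_{b,0} on x ≥ p
    (heqa : ∀ t ≤ p, uaα t = ua₀ t) (heqa' : ∀ t < p, uaα' t = ua₀' t)
    (heqb : ∀ t, p ≤ t → ubα t = ub₀ t ∧ ubα' t = ub₀' t)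
    -- the free Wronskian does not vanish (z is not an eigenvalue of H₀)
    (hW₀ : ua₀ p * ub₀' p - ua₀' p * ub₀ p ≠ 0) :
    uaα p * ubα p / (uaα p * ubα' p - uaα' p * ubα p)
      = (ua₀ p * ub₀ p / (ua₀ p * ub₀' p - ua₀' p * ub₀ p))
        / (1 - (α : ℂ) * (ua₀ p * ub₀ p / (ua₀ p * ub₀' p - ua₀' p * ub₀ p))) :=
  green_function_one_delta_interaction_general V a b p α z hp ua₀ ua₀' uaα uaα' ub₀ ub₀' ubα ubα'
    h0a hjumpa heqa heqa' heqb hW₀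
end
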